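/- arXiv:1212.0700 — 4 statements merged into one kernel-verified Lean document; each statement's English description precedes it below -/
import Mathlib

section
/- Let X be a metric space with 0 < ℋ¹(X) < ∞, and let g : X³ → [0,∞] be a Borel function with ∫_{X³} g d(ℋ¹)³ < ∞. Then for every ε > 0 there exists a Borel set Z ⊂ X such that (i) ℋ¹(Z) > diam(Z)/40, (ii) ℋ¹(Z ∩ B(z,r)) ≤ 3r for every z ∈ Z and r > 0, and (iii) ∫_{Z³} g d(ℋ¹)³ ≤ ε·diam(Z). -/
open MeasureTheory Metric Set
open scoped ENNReal NNReal

/-- The Menger curvature of a triple of points in a metric space. -/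
noncomputable def mengerCurvature {X : Type*} [MetricSpace X] (z₁ z₂ z₃ : X) : ℝ :=
  2 * Real.sin (Real.arccos ((dist z₁ z₂ ^ 2 + dist z₂ z₃ ^ 2 - dist z₁ z₃ ^ 2) /
      (2 * dist z₁ z₂ * dist z₂ z₃))) / dist z₁ z₃

/-- The set `𝒯_K(Z)` of triples whose mutual distances are comparable with constant `K`. -/
def tripleSet {X : Type*} [MetricSpace X] (K : ℝ≥0∞) (Z : Set X) : Set (X × X × X) :=
  {p | p.1 ∈ Z ∧ p.2.1 ∈ Z ∧ p.2.2 ∈ Z ∧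
    ∀ i j k l : Fin 3, k ≠ l →
      edist (![p.1, p.2.1, p.2.2] i) (![p.1, p.2.1, p.2.2] j) <
        K * edist (![p.1, p.2.1, p.2.2] k) (![p.1, p.2.1, p.2.2] l)}

/-- The curvature energy `c²_K(Z, μ)`. -/
noncomputable def c2K {X : Type*} [MetricSpace X] [MeasurableSpace X]
    (K : ℝ≥0∞) (Z : Set X) (μ : Measure X) : ℝ≥0∞ :=
  ∫⁻ p in tripleSet K Z, ENNReal.ofReal (mengerCurvature p.1 p.2.1 p.2.2 ^ 2)
    ∂(μ.prod (μ.prod μ))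

/-- `∂(z₁,z₂,z₃)`: the minimal excess over the permutations of the triple. -/
noncomputable def tripleExcess {X : Type*} [MetricSpace X] (z₁ z₂ z₃ : X) : ℝ :=
  min (min (dist z₁ z₂ + dist z₂ z₃ - dist z₁ z₃)
           (dist z₂ z₁ + dist z₁ z₃ - dist z₂ z₃))
      (dist z₁ z₃ + dist z₃ z₂ - dist z₁ z₂)

/-- The quantity `β(Z)`. -/
noncomputable def betaInt {X : Type*} [MetricSpace X] [MeasurableSpace X] [BorelSpace X]
    (Z : Set X) : ℝ≥0∞ :=
  ∫⁻ p in Z ×ˢ Z ×ˢ Z,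
    ENNReal.ofReal (tripleExcess p.1 p.2.1 p.2.2 / Metric.diam {p.1, p.2.1, p.2.2} ^ 3)
    ∂((μH[1] : Measure X).prod ((μH[1] : Measure X).prod (μH[1] : Measure X)))

/-- A metric space is rectifiable if a Lipschitz image of a subset of `ℝ` covers it up to
`ℋ¹`-measure zero. -/
def MetricRectifiable (X : Type*) [MetricSpace X] [MeasurableSpace X] [BorelSpace X] : Prop :=
  ∃ (E : Set ℝ) (f : ℝ → X) (L : ℝ≥0), LipschitzOnWith L f E ∧
    μH[1] (Set.univ \ f '' E) = 0

/-- The relation `xyz`: `y` lies strictly between `x` and `z`. -/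
def MBtw {X : Type*} [MetricSpace X] (x y z : X) : Prop :=
  max (dist x y) (dist y z) < dist x z

/-- The class `Om(φ)` for a metric space. -/
def OmSpace (X : Type*) [MetricSpace X] (φ : ℝ) : Prop :=
  ∀ x y z : X, MBtw x y z → dist x y + φ * dist y z ≤ dist x z

/-- The condition `Om(φ)` for a subset of a metric space. -/
def OmSet {X : Type*} [MetricSpace X] (φ : ℝ) (S : Set X) : Prop :=
  ∀ x ∈ S, ∀ y ∈ S, ∀ z ∈ S, MBtw x y z → dist x y + φ * dist y z ≤ dist x z

/-- A metric space is orderable if it admits an order compatible with betweenness. -/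
def Orderable (X : Type*) [MetricSpace X] : Prop :=
  ∃ o : X → ℝ, Function.Injective o ∧ ∀ x y z : X, o x < o y → o y < o z → MBtw x y z

/-!
At `ℋ¹`-almost every point, balls of small radius `r` carry mass at most `3r`: the points where
this fails at arbitrarily small scales are covered, via the Vitali covering lemma, by disjoint
heavy balls inside any open neighbourhood `U`, which bounds their measure by `(2/3) ℋ¹(U)`, hence
by outer regularity by `2/3` of itself. By Fubini and absolute continuity, for almost every `z`
the integral of `g(z, ·)` over `B(z, σ)²` tends to `0` with `σ`. Hence for suitable scales `ρ`
and `σ` both bounds hold uniformly on a Borel set `A` of positive measure. If every piece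
`A ∩ B(z, r)` of small radius had mass at most `r / 20`, then `ℋ¹(A) ≤ ℋ¹(A) / 20`; so some such
piece `Z` is heavy, which is (i). As `Z` is small, the bound at scales below `ρ` gives (ii) at
all scales, and integrating the local bound over `Z`, with `ℋ¹(Z) ≤ 3 diam Z` from (ii), gives
(iii).
-/

open Filter Topology

section MetricGeometry

variable {X : Type*} [MetricSpace X]

theorem ediam_closedBall_le_ofReal (x : X) (r : ℝ) :
    ediam (closedBall x r) ≤ ENNReal.ofReal (2 * r) :=
  ediam_le_of_forall_dist_le fun a ha b hb => by
    linarith [dist_triangle_right a b x, mem_closedBall.1 ha, mem_closedBall.1 hb]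

theorem isClosed_setOf_forall_measure_closedBall_le [MeasurableSpace X] (μ : Measure X)
    (ρ c : ℝ) :
    IsClosed {z : X | ∀ r ∈ Ioo 0 ρ, μ (closedBall z r) ≤ ENNReal.ofReal (c * r)} := by
  refine isClosed_of_closure_subset fun z hz r hr => ?_
  have hlim : Tendsto (fun r' => ENNReal.ofReal (c * r')) (𝓝[>] r)
      (𝓝 (ENNReal.ofReal (c * r))) :=
    (ENNReal.continuous_ofReal.comp (continuous_const.mul continuous_id)).continuousWithinAt
  refine ge_of_tendsto hlim ?_
  filter_upwards [Ioo_mem_nhdsGT hr.2] with r' hr'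
  obtain ⟨z', hz', hzz'⟩ := Metric.mem_closure_iff.1 hz (r' - r) (by linarith [hr'.1])
  calc μ (closedBall z r) ≤ μ (closedBall z' r') :=
        measure_mono (closedBall_subset_closedBall' (by linarith))
    _ ≤ _ := hz' r' ⟨hr.1.trans hr'.1, hr'.2⟩

theorem measure_le_ofReal_mul_ediam [MeasurableSpace X] (μ : Measure X) {Z : Set X} {c : ℝ}
    (hc : 0 ≤ c) (hZ : ∀ z ∈ Z, ∀ s > 0, μ (Z ∩ closedBall z s) ≤ ENNReal.ofReal (c * s))
    (hd : ediam Z ≠ ∞) :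
    μ Z ≤ ENNReal.ofReal c * ediam Z := by
  rcases Z.eq_empty_or_nonempty with rfl | ⟨z, hz⟩
  · simp
  set D := (ediam Z).toReal
  have hlim : Tendsto (fun s => ENNReal.ofReal (c * s)) (𝓝[>] D)
      (𝓝 (ENNReal.ofReal (c * D))) :=
    (ENNReal.continuous_ofReal.comp (continuous_const.mul continuous_id)).continuousWithinAt
  rw [← ENNReal.ofReal_toReal hd, ← ENNReal.ofReal_mul hc]
  refine ge_of_tendsto hlim ?_
  filter_upwards [self_mem_nhdsWithin] with s (hs : D < s)
  have hZs : Z ⊆ closedBall z s := fun y hy =>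
    (dist_edist y z ▸ ENNReal.toReal_mono hd (edist_le_ediam_of_mem hy hz)).trans hs.le
  simpa [inter_eq_left.2 hZs] using hZ z hz s (ENNReal.toReal_nonneg.trans_lt hs)

theorem measure_inter_closedBall_le_of_subset_closedBall [MeasurableSpace X] (μ : Measure X)
    {Z : Set X} {z₀ : X} {r ρ c : ℝ} (hc : 0 ≤ c) (hZ : Z ⊆ closedBall z₀ r) (hrρ : 2 * r < ρ)
    (h : ∀ z ∈ Z, ∀ s ∈ Ioo 0 ρ, μ (closedBall z s) ≤ ENNReal.ofReal (c * s)) :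
    ∀ z ∈ Z, ∀ s > 0, μ (Z ∩ closedBall z s) ≤ ENNReal.ofReal (c * s) := by
  intro z hz s hs
  rcases lt_or_ge s ρ with hsρ | hsρ
  · exact (measure_mono inter_subset_right).trans (h z hz s ⟨hs, hsρ⟩)
  have hr : 0 ≤ r := dist_nonneg.trans (hZ hz)
  have hZz : Z ⊆ closedBall z ((2 * r + ρ) / 2) :=
    hZ.trans (closedBall_subset_closedBall' (by linarith [mem_closedBall'.1 (hZ hz)]))
  calc μ (Z ∩ closedBall z s) ≤ μ (closedBall z ((2 * r + ρ) / 2)) :=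
        measure_mono (inter_subset_left.trans hZz)
    _ ≤ ENNReal.ofReal (c * ((2 * r + ρ) / 2)) := h z hz _ ⟨by linarith, by linarith⟩
    _ ≤ ENNReal.ofReal (c * s) := ENNReal.ofReal_le_ofReal (by nlinarith)

theorem exists_disjoint_closedBall_family_cover [TopologicalSpace.SeparableSpace X]
    {U N : Set X} (hU : IsOpen U) (hNU : N ⊆ U) (P : X → ℝ → Prop)
    (hN : ∀ z ∈ N, ∀ θ > 0, ∃ r ∈ Ioo 0 θ, P z r) {δ : ℝ} (hδ : 0 < δ) :
    ∃ u : Set (X × ℝ), u.Countable ∧ u.PairwiseDisjoint (fun p => closedBall p.1 p.2) ∧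
      (∀ p ∈ u, p.2 ∈ Ioc 0 δ ∧ closedBall p.1 p.2 ⊆ U ∧ P p.1 p.2) ∧
      ∀ F : Set (X × ℝ), F.Finite →
        N ⊆ (⋃ p ∈ F, closedBall p.1 p.2) ∪ ⋃ p ∈ u \ F, closedBall p.1 (3 * p.2) := by
  set T : Set (X × ℝ) := {p | p.2 ∈ Ioc 0 δ ∧ closedBall p.1 p.2 ⊆ U ∧ P p.1 p.2}
  obtain ⟨u, huT, hdisj, hcov⟩ := Vitali.exists_disjoint_subfamily_covering_enlargement
    (fun p : X × ℝ => closedBall p.1 p.2) T (fun p => p.2) 2 one_lt_two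
    (fun p hp => hp.1.1.le) δ (fun p hp => hp.1.2) (fun p hp => nonempty_closedBall.2 hp.1.1.le)
  refine ⟨u, hdisj.countable_of_nonempty_interior fun p hp =>
    ⟨p.1, mem_interior_iff_mem_nhds.2 (closedBall_mem_nhds _ (huT hp).1.1)⟩,
    hdisj, fun p hp => huT hp, fun F hF z hz => ?_⟩
  set K := ⋃ p ∈ F, closedBall p.1 p.2
  by_cases hzK : z ∈ K
  · exact Or.inl hzK
  -- a ball around `z` missing the closed set `K` meets a selected ball, which is then not in `F`
  obtain ⟨θ, hθ, hθK⟩ := Metric.isOpen_iff.1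
    (hU.sdiff (hF.isClosed_biUnion fun _ _ => isClosed_closedBall)) z ⟨hNU hz, hzK⟩
  obtain ⟨r, ⟨hr0, hrθ⟩, hPr⟩ := hN z hz (min δ (θ / 2)) (lt_min hδ (half_pos hθ))
  have hsmall : closedBall z r ⊆ U \ K :=
    (closedBall_subset_ball (by linarith [min_le_right δ (θ / 2)])).trans hθK
  obtain ⟨b, hbu, ⟨w, hwz, hwb⟩, hrb⟩ :=
    hcov (z, r) ⟨⟨hr0, (hrθ.trans_le (min_le_left _ _)).le⟩, hsmall.trans sdiff_subset, hPr⟩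
  have hbF : b ∉ F := fun hbF => (hsmall hwz).2 (mem_biUnion hbF hwb)
  refine Or.inr (mem_biUnion ⟨hbu, hbF⟩ ?_)
  have hrb : r ≤ 2 * b.2 := hrb
  rw [mem_closedBall] at hwz hwb ⊢
  linarith [dist_triangle_left z b.1 w]

theorem exists_cover_tsum_ediam_le {N : Set X} {u : Set (X × ℝ)} {δ : ℝ}
    (hu : ∀ p ∈ u, p.2 ∈ Ioc 0 δ)
    (hcover : ∀ F : Set (X × ℝ), F.Finite →
      N ⊆ (⋃ p ∈ F, closedBall p.1 p.2) ∪ ⋃ p ∈ u \ F, closedBall p.1 (3 * p.2))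
    (hS : ∑' p : u, ENNReal.ofReal p.1.2 ≠ ∞) {η : ℝ≥0∞} (hη : η ≠ 0) :
    ∃ t : u → Set X, N ⊆ ⋃ p, t p ∧ (∀ p, ediam (t p) ≤ ENNReal.ofReal (6 * δ)) ∧
      ∑' p, ediam (t p) ≤ 2 * ∑' p : u, ENNReal.ofReal p.1.2 + η := by
  classical
  obtain ⟨F, hF⟩ : ∃ F : Finset u, ∑' p : {p // p ∉ F}, ENNReal.ofReal p.1.1.2 < η / 4 :=
    ((ENNReal.tendsto_tsum_compl_atTop_zero hS).eventually_lt_const (by simpa using hη)).exists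
  set t : u → Set X := fun p => closedBall p.1.1 (if p ∈ F then p.1.2 else 3 * p.1.2)
  have hdiam : ∀ p, ediam (t p) ≤ 2 * ENNReal.ofReal p.1.2 +
      (↑F : Set u)ᶜ.indicator (fun p => 4 * ENNReal.ofReal p.1.2) p := by
    intro p
    have hp0 := (hu p p.2).1.le
    by_cases hpF : p ∈ F
    · simpa [t, hpF, ENNReal.ofReal_mul] using ediam_closedBall_le_ofReal p.1.1 p.1.2
    · refine (ediam_closedBall_le_ofReal _ _).trans (le_of_eq ?_)
      rw [if_neg hpF, indicator_of_mem (by simpa using hpF), show 2 * (3 * p.1.2) =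
        2 * p.1.2 + 4 * p.1.2 by ring, ENNReal.ofReal_add (by positivity) (by positivity),
        ENNReal.ofReal_mul (by norm_num), ENNReal.ofReal_mul (by norm_num)]
      simp
  refine ⟨t, fun z hz => ?_, fun p => ?_, ?_⟩
  · rcases hcover _ (F.finite_toSet.image Subtype.val) hz with hz | hz
    · obtain ⟨_, ⟨p, hpF, rfl⟩, hzp⟩ := mem_iUnion₂.1 hz
      exact mem_iUnion.2 ⟨p, by simpa [t, Finset.mem_coe.1 hpF] using hzp⟩
    · obtain ⟨q, ⟨hqu, hqF⟩, hzq⟩ := mem_iUnion₂.1 hz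
      have hqF' : (⟨q, hqu⟩ : u) ∉ F := fun h => hqF ⟨_, h, rfl⟩
      exact mem_iUnion.2 ⟨⟨q, hqu⟩, by simpa [t, hqF'] using hzq⟩
  · have := hu p p.2
    refine (ediam_closedBall_le_ofReal _ _).trans (ENNReal.ofReal_le_ofReal ?_)
    split_ifs <;> linarith [this.1, this.2]
  calc ∑' p, ediam (t p)
      ≤ ∑' p : u, (2 * ENNReal.ofReal p.1.2 +
          (↑F : Set u)ᶜ.indicator (fun p => 4 * ENNReal.ofReal p.1.2) p) :=
        ENNReal.tsum_le_tsum hdiam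
    _ = 2 * ∑' p : u, ENNReal.ofReal p.1.2 +
          4 * ∑' p : {p // p ∉ F}, ENNReal.ofReal p.1.1.2 := by
        rw [ENNReal.tsum_add, ENNReal.tsum_mul_left, ← tsum_subtype, ENNReal.tsum_mul_left]
        rfl
    _ ≤ 2 * ∑' p : u, ENNReal.ofReal p.1.2 + η := by
        gcongr
        calc 4 * _ ≤ 4 * (η / 4) := by gcongr
          _ = η := ENNReal.mul_div_cancel' (by norm_num) (by norm_num)

end MetricGeometry

section HausdorffMeasure

variable {X : Type*} [MetricSpace X] [MeasurableSpace X] [BorelSpace X]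

theorem secondCountableTopology_of_hausdorffMeasure_univ_ne_top {d : ℝ}
    (h : μH[d] (univ : Set X) ≠ ∞) : SecondCountableTopology X := by
  refine Metric.secondCountable_of_almost_dense_set fun ε hε => ?_
  have hcover : (⨅ (t : ℕ → Set X) (_ : univ ⊆ ⋃ n, t n)
      (_ : ∀ n, ediam (t n) ≤ ENNReal.ofReal ε), ∑' n, ⨆ _ : (t n).Nonempty, ediam (t n) ^ d)
      < ∞ := by
    refine lt_of_le_of_lt ?_ h.lt_top
    rw [Measure.hausdorffMeasure_apply]
    exact le_iSup₂_of_le (ENNReal.ofReal ε) (ENNReal.ofReal_pos.2 hε) le_rfl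
  simp only [iInf_lt_iff] at hcover
  obtain ⟨t, hcov, hdiam, -⟩ := hcover
  refine ⟨range fun n : {n // (t n).Nonempty} => n.2.some, countable_range _, fun x => ?_⟩
  obtain ⟨n, hn⟩ := mem_iUnion.1 (hcov (mem_univ x))
  refine ⟨_, mem_range_self ⟨n, x, hn⟩, ?_⟩
  exact (edist_le_ofReal hε.le).1
    ((edist_le_ediam_of_mem hn (Nonempty.some_mem _)).trans (hdiam n))

theorem hausdorffMeasure_le_of_forall_cover (d : ℝ) (s : Set X) (C : ℝ≥0∞)
    (h : ∀ δ : ℝ≥0∞, 0 < δ → ∃ (ι : Type*) (_ : Countable ι) (t : ι → Set X),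
      s ⊆ ⋃ i, t i ∧ (∀ i, ediam (t i) ≤ δ) ∧ ∑' i, ediam (t i) ^ d ≤ C) :
    μH[d] s ≤ C := by
  choose ι hι t hcov hdiam hsum using fun n : ℕ => h ((n + 1 : ℕ) : ℝ≥0∞)⁻¹ (by simp)
  have hr : Tendsto (fun n : ℕ => ((n + 1 : ℕ) : ℝ≥0∞)⁻¹) atTop (𝓝 0) :=
    ENNReal.tendsto_inv_nat_nhds_zero.comp (tendsto_add_atTop_nat 1)
  refine (Measure.hausdorffMeasure_le_liminf_tsum d s _ hr t (.of_forall hdiam)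
    (.of_forall hcov)).trans (liminf_le_of_frequently_le' (.of_forall hsum))

theorem mul_hausdorffMeasure_le_of_frequently_lt_measure_closedBall
    [TopologicalSpace.SeparableSpace X] (μ : Measure X) {c : ℝ≥0∞} (hc : c ≠ 0)
    {U N : Set X} (hU : IsOpen U) (hNU : N ⊆ U) (hμU : μ U ≠ ∞)
    (hN : ∀ z ∈ N, ∀ θ > 0, ∃ r ∈ Ioo 0 θ, c * ENNReal.ofReal r < μ (closedBall z r)) :
    c * μH[1] N ≤ 2 * μ U := by
  suffices h : μH[1] N ≤ 2 * (μ U / c) by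
    calc c * μH[1] N ≤ c * (2 * (μ U / c)) := by gcongr
      _ = 2 * (c * (μ U / c)) := by ring
      _ ≤ 2 * μ U := by gcongr; exact ENNReal.mul_div_le
  refine ENNReal.le_of_forall_pos_le_add fun η hη _ => ?_
  refine hausdorffMeasure_le_of_forall_cover 1 N _ fun δ hδ => ?_
  obtain ⟨δ', hδ'0, hδ'⟩ : ∃ δ' : ℝ, 0 < δ' ∧ ENNReal.ofReal (6 * δ') ≤ δ := by
    obtain ⟨δ'', -, hδ''0, hδ''⟩ := ENNReal.lt_iff_exists_real_btwn.1 hδ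
    exact ⟨δ'' / 6, by linarith [ENNReal.ofReal_pos.1 hδ''0],
      by rw [mul_div_cancel₀ _ (by norm_num)]; exact hδ''.le⟩
  obtain ⟨u, hu_count, hdisj, hu, hcover⟩ :=
    exists_disjoint_closedBall_family_cover hU hNU _ hN hδ'0
  have : Countable u := hu_count.to_subtype
  have hS : ∑' p : u, ENNReal.ofReal p.1.2 ≤ μ U / c := by
    rw [ENNReal.le_div_iff_mul_le (.inl hc) (.inr hμU), mul_comm, ← ENNReal.tsum_mul_left]
    calc ∑' p : u, c * ENNReal.ofReal p.1.2 ≤ ∑' p : u, μ (closedBall p.1.1 p.1.2) :=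
          ENNReal.tsum_le_tsum fun p => (hu p p.2).2.2.le
      _ = μ (⋃ p : u, closedBall p.1.1 p.1.2) :=
          (measure_iUnion (hdisj.subtype _ _) fun _ => measurableSet_closedBall).symm
      _ ≤ μ U := measure_mono (iUnion_subset fun p => (hu p p.2).2.1)
  obtain ⟨t, hNt, htδ, ht⟩ := exists_cover_tsum_ediam_le (fun p hp => (hu p hp).1) hcover
    (hS.trans_lt (ENNReal.div_lt_top hμU hc)).ne (η := η) (by simpa using hη.ne')
  refine ⟨u, inferInstance, t, hNt, fun p => (htδ p).trans hδ', ?_⟩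
  simpa using ht.trans (by gcongr)

theorem ae_exists_forall_hausdorffMeasure_closedBall_le
    (hfin : μH[1] (univ : Set X) ≠ ∞) {c : ℝ} (hc : 2 < c) :
    ∀ᵐ z ∂(μH[1] : Measure X), ∃ ρ > 0, ∀ r ∈ Ioo 0 ρ,
      μH[1] (closedBall z r) ≤ ENNReal.ofReal (c * r) := by
  have := secondCountableTopology_of_hausdorffMeasure_univ_ne_top hfin
  have : IsFiniteMeasure (μH[1] : Measure X) := ⟨hfin.lt_top⟩
  set N := {z : X | ¬ ∃ ρ > 0, ∀ r ∈ Ioo 0 ρ, μH[1] (closedBall z r) ≤ ENNReal.ofReal (c * r)}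
  have hN : ∀ z ∈ N, ∀ θ > 0, ∃ r ∈ Ioo 0 θ,
      ENNReal.ofReal c * ENNReal.ofReal r < μH[1] (closedBall z r) := by
    intro z hz θ hθ
    obtain ⟨r, hr, hlt⟩ : ∃ r ∈ Ioo 0 θ, ENNReal.ofReal (c * r) < μH[1] (closedBall z r) := by
      by_contra! h
      exact hz ⟨θ, hθ, h⟩
    exact ⟨r, hr, by rwa [← ENNReal.ofReal_mul (by linarith)]⟩
  rw [ae_iff]
  by_contra hN0
  -- by outer regularity, `c ℋ¹(N) ≤ 2 ℋ¹(U)` for all open `U ⊇ N` forces `ℋ¹(N) = 0`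
  have hc' : 2 < ENNReal.ofReal c := by
    simpa using (ENNReal.ofReal_lt_ofReal_iff (by linarith)).2 hc
  have hlt : μH[1] N < ENNReal.ofReal c * μH[1] N / 2 := by
    rw [ENNReal.lt_div_iff_mul_lt (by norm_num) (by norm_num), mul_comm]
    exact ENNReal.mul_lt_mul_left hN0 (measure_ne_top _ N) hc'
  obtain ⟨U, hNU, hU, hUlt⟩ := Set.exists_isOpen_lt_of_lt N _ hlt
  have hle := mul_hausdorffMeasure_le_of_frequently_lt_measure_closedBall μH[1]
    (by positivity) hU hNU (measure_ne_top _ U) hN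
  have := hle.trans_lt (ENNReal.mul_lt_mul_right (by norm_num) (by norm_num) hUlt)
  rw [ENNReal.mul_div_cancel' (by norm_num) (by norm_num)] at this
  exact this.false

theorem exists_closedBall_mul_lt_hausdorffMeasure_inter {A : Set X} (hA : MeasurableSet A)
    (h0 : μH[1] A ≠ 0) (hfin : μH[1] A ≠ ∞) {c : ℝ≥0∞} (hc : c < 1) {δ : ℝ} (hδ : 0 < δ) :
    ∃ z ∈ A, ∃ r ∈ Ioc 0 δ, c * ENNReal.ofReal r < μH[1] (A ∩ closedBall z r) := by
  have := Measure.nullSingletonClass_hausdorff (X := X) one_pos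
  by_contra! hsmall
  -- otherwise `c⁻¹ • ℋ¹|_A` is dominated by `ℋ¹`, which is absurd on `A` since `c⁻¹ > 1`
  have hle : c⁻¹ • (μH[1] : Measure X).restrict A ≤ μH[1] := by
    refine Measure.le_hausdorffMeasure 1 _ (ENNReal.ofReal δ) (by positivity) fun s hs => ?_
    rw [Measure.smul_apply, smul_eq_mul, Measure.restrict_apply' hA, ENNReal.rpow_one]
    rcases (s ∩ A).eq_empty_or_nonempty with he | ⟨z, hzs, hzA⟩
    · simp [he]
    rcases eq_or_ne (ediam s) 0 with hd | hd
    · have hsub : s ∩ A ⊆ {z} := fun y hy => ediam_eq_zero_iff.1 hd hy.1 hzs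
      simp [measure_mono_null hsub (measure_singleton z)]
    have hdfin : ediam s ≠ ∞ := ne_top_of_le_ne_top ENNReal.ofReal_ne_top hs
    set r := (ediam s).toReal
    have hsub : s ∩ A ⊆ A ∩ closedBall z r := fun y hy =>
      ⟨hy.2, mem_closedBall.2 <|
        dist_edist y z ▸ ENNReal.toReal_mono hdfin (edist_le_ediam_of_mem hy.1 hzs)⟩
    calc c⁻¹ * μH[1] (s ∩ A) ≤ c⁻¹ * (c * ediam s) := by
          gcongr
          refine (measure_mono hsub).trans ?_
          simpa [r, ENNReal.ofReal_toReal hdfin] using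
            hsmall z hzA r ⟨ENNReal.toReal_pos hd hdfin, ENNReal.toReal_le_of_le_ofReal hδ.le hs⟩
      _ = c⁻¹ * c * ediam s := (mul_assoc _ _ _).symm
      _ ≤ ediam s := by simpa using mul_le_mul_left (ENNReal.inv_mul_le_one c) (ediam s)
  have := hle A
  rw [Measure.smul_apply, smul_eq_mul, Measure.restrict_apply_self] at this
  exact (ENNReal.mul_lt_mul_left h0 hfin (ENNReal.one_lt_inv.2 hc)).not_ge (by simpa using this)

end HausdorffMeasure

theorem exists_measure_inter_ne_zero_of_ae_exists {α : Type*} [MeasurableSpace α]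
    {μ : Measure α} {s : Set α} (hs : μ s ≠ 0) {t : ℕ → Set α} (ht : ∀ᵐ x ∂μ, ∃ n, x ∈ t n) :
    ∃ n, μ (s ∩ t n) ≠ 0 := by
  by_contra! h
  refine hs (measure_mono_null_ae ?_ (measure_iUnion_null h))
  filter_upwards [ht] with x ⟨n, hn⟩ hx
  exact mem_iUnion.2 ⟨n, hx, hn⟩

theorem setLIntegral_prod_le {α β : Type*} [MeasurableSpace α] [MeasurableSpace β]
    {μ : Measure α} {ν : Measure β} [SFinite μ] [SFinite ν] {f : α × β → ℝ≥0∞}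
    (hf : Measurable f) {s : Set α} {t : Set β} {η : ℝ≥0∞}
    (h : ∀ x ∈ s, ∫⁻ y in t, f (x, y) ∂ν ≤ η) :
    ∫⁻ p in s ×ˢ t, f p ∂μ.prod ν ≤ η * μ s := by
  rw [← Measure.prod_restrict, lintegral_prod _ hf.aemeasurable]
  calc ∫⁻ x in s, ∫⁻ y in t, f (x, y) ∂ν ∂μ ≤ ∫⁻ _ in s, η ∂μ :=
        setLIntegral_mono measurable_const h
    _ = η * μ s := setLIntegral_const _ _

section LocalIntegral

variable {X Y : Type*} [MeasurableSpace X] [MetricSpace Y] [MeasurableSpace Y]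
  [OpensMeasurableSpace Y]

theorem measurable_setLIntegral_closedBall [TopologicalSpace X] [OpensMeasurableSpace (X × Y)]
    {ν : Measure Y} [SFinite ν] {f : X × Y → ℝ≥0∞} (hf : Measurable f) {φ : X → Y}
    (hφ : Continuous φ) (ρ : ℝ) :
    Measurable fun x => ∫⁻ y in closedBall (φ x) ρ, f (x, y) ∂ν := by
  have hS : MeasurableSet {p : X × Y | dist p.2 (φ p.1) ≤ ρ} :=
    (isClosed_le (by fun_prop) continuous_const).measurableSet
  convert (hf.indicator hS).lintegral_prod_right' (ν := ν) using 1
  funext x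
  rw [← lintegral_indicator measurableSet_closedBall]
  rfl

theorem tendsto_setLIntegral_closedBall_zero {ν : Measure Y} {f : Y → ℝ≥0∞}
    (hf : ∫⁻ y, f y ∂ν ≠ ∞) {y : Y} (hy : ν {y} = 0) :
    Tendsto (fun r => ∫⁻ y' in closedBall y r, f y' ∂ν) (𝓝[>] 0) (𝓝 0) := by
  have hlim := tendsto_measure_cthickening_of_isClosed (μ := ν.withDensity f)
    ⟨1, one_pos, ne_top_of_le_ne_top (by simpa using hf) (measure_mono (subset_univ _))⟩
    (isClosed_singleton (x := y))
  rw [withDensity_apply _ (measurableSet_singleton y), Measure.restrict_eq_zero.2 hy,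
    lintegral_zero_measure] at hlim
  refine (hlim.mono_left nhdsWithin_le_nhds).congr' ?_
  filter_upwards [self_mem_nhdsWithin] with r (hr : 0 < r)
  rw [cthickening_singleton _ hr.le, withDensity_apply _ measurableSet_closedBall]

theorem exists_measure_inter_setLIntegral_closedBall_le_ne_zero
    {μ : Measure X} [SFinite μ] {ν : Measure Y} [SFinite ν] {f : X × Y → ℝ≥0∞}
    (hf : Measurable f) (hfint : ∫⁻ p, f p ∂μ.prod ν ≠ ∞) {φ : X → Y}
    (hνφ : ∀ x, ν {φ x} = 0) {s : Set X} (hs : μ s ≠ 0) {η : ℝ≥0∞} (hη : η ≠ 0) :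
    ∃ ρ > 0, μ (s ∩ {x | ∫⁻ y in closedBall (φ x) ρ, f (x, y) ∂ν ≤ η}) ≠ 0 := by
  have hslice : ∀ᵐ x ∂μ, ∫⁻ y, f (x, y) ∂ν < ∞ :=
    ae_lt_top hf.lintegral_prod_right' (by rwa [← lintegral_prod _ hf.aemeasurable])
  have hseq : Tendsto (fun n : ℕ => 1 / ((n : ℝ) + 1)) atTop (𝓝[>] 0) :=
    tendsto_nhdsWithin_iff.2 ⟨tendsto_one_div_add_atTop_nhds_zero_nat,
      .of_forall fun _ => mem_Ioi.2 Nat.one_div_pos_of_nat⟩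
  obtain ⟨n, hn⟩ := exists_measure_inter_ne_zero_of_ae_exists hs
    (t := fun n : ℕ => {x | ∫⁻ y in closedBall (φ x) (1 / (n + 1)), f (x, y) ∂ν ≤ η}) <| by
      filter_upwards [hslice] with x hx
      exact (hseq.eventually <| (tendsto_setLIntegral_closedBall_zero hx.ne (hνφ x))
        |>.eventually_le_const (pos_iff_ne_zero.2 hη)).exists
  exact ⟨_, Nat.one_div_pos_of_nat, hn⟩

end LocalIntegral

theorem exists_measurableSet_uniform_density_and_local_integral_le {X : Type*} [MetricSpace X]
    [MeasurableSpace X] [BorelSpace X] (h0 : μH[1] (univ : Set X) ≠ 0)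
    (h1 : μH[1] (univ : Set X) ≠ ∞) {c : ℝ} (hc : 2 < c) {g : X × X × X → ℝ≥0∞}
    (hg : Measurable g)
    (hgint : ∫⁻ p, g p ∂(μH[1] : Measure X).prod ((μH[1] : Measure X).prod μH[1]) ≠ ∞)
    {η : ℝ≥0∞} (hη : η ≠ 0) :
    ∃ A : Set X, MeasurableSet A ∧ μH[1] A ≠ 0 ∧ ∃ ρ > 0, ∃ σ > 0, ∀ z ∈ A,
      (∀ r ∈ Ioo 0 ρ, μH[1] (closedBall z r) ≤ ENNReal.ofReal (c * r)) ∧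
      ∫⁻ q in closedBall (z, z) σ, g (z, q) ∂(μH[1] : Measure X).prod μH[1] ≤ η := by
  set μ : Measure X := μH[1]
  have : IsFiniteMeasure μ := ⟨h1.lt_top⟩
  have : SecondCountableTopology X := secondCountableTopology_of_hausdorffMeasure_univ_ne_top h1
  have := Measure.nullSingletonClass_hausdorff (X := X) one_pos
  obtain ⟨n, hG⟩ := exists_measure_inter_ne_zero_of_ae_exists h0
    (t := fun n : ℕ => {z | ∀ r ∈ Ioo (0 : ℝ) (1 / (n + 1)),
      μ (closedBall z r) ≤ ENNReal.ofReal (c * r)}) <| by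
    filter_upwards [ae_exists_forall_hausdorffMeasure_closedBall_le h1 hc] with z ⟨ρ, hρ, hz⟩
    obtain ⟨n, hn⟩ := exists_nat_one_div_lt hρ
    exact ⟨n, fun r hr => hz r ⟨hr.1, hr.2.trans hn⟩⟩
  rw [univ_inter] at hG
  obtain ⟨σ, hσ, hA⟩ := exists_measure_inter_setLIntegral_closedBall_le_ne_zero hg hgint
    (φ := fun z => (z, z))
    (fun z => by rw [← singleton_prod_singleton, Measure.prod_prod, measure_singleton, zero_mul])
    hG hη
  refine ⟨_, ?_, hA, _, Nat.one_div_pos_of_nat, σ, hσ, fun z hz => hz⟩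
  exact (isClosed_setOf_forall_measure_closedBall_le μ _ c).measurableSet.inter
    (measurableSet_le (measurable_setLIntegral_closedBall hg (by fun_prop) σ) measurable_const)

/-- Let `X` be a metric space with `0 < ℋ¹(X) < ∞` and let `g : X³ → [0,∞]`
be a Borel function with `∫_{X³} g d(ℋ¹)³ < ∞`. Then for every `ε > 0` there is a Borel set
`Z ⊆ X` with `ℋ¹(Z) > diam Z / 40`, `ℋ¹(Z ∩ B(z,r)) ≤ 3r` for all `z ∈ Z`, `r > 0`, and
`∫_{Z³} g d(ℋ¹)³ ≤ ε·diam Z`. -/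
theorem stmt7 (X : Type*) [MetricSpace X] [MeasurableSpace X] [BorelSpace X]
    (h0 : 0 < μH[1] (Set.univ : Set X)) (h1 : μH[1] (Set.univ : Set X) < ⊤)
    (g : X × X × X → ℝ≥0∞) (hg : Measurable g)
    (hgint : (∫⁻ p, g p
        ∂((μH[1] : Measure X).prod ((μH[1] : Measure X).prod (μH[1] : Measure X)))) < ⊤)
    (ε : ℝ) (hε : 0 < ε) :
    ∃ Z : Set X, MeasurableSet Z ∧
      EMetric.diam Z / 40 < μH[1] Z ∧
      (∀ z ∈ Z, ∀ r : ℝ, 0 < r →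
        μH[1] (Z ∩ Metric.closedBall z r) ≤ ENNReal.ofReal (3 * r)) ∧
      (∫⁻ p in Z ×ˢ Z ×ˢ Z, g p
        ∂((μH[1] : Measure X).prod ((μH[1] : Measure X).prod (μH[1] : Measure X)))) ≤
        ENNReal.ofReal ε * EMetric.diam Z := by
  have : IsFiniteMeasure (μH[1] : Measure X) := ⟨h1⟩
  obtain ⟨A, hAmeas, hA, ρ, hρ, σ, hσ, hAgood⟩ :=
    exists_measurableSet_uniform_density_and_local_integral_le h0.ne' h1.ne
      (by norm_num : (2 : ℝ) < 3) hg hgint.ne (η := ENNReal.ofReal (ε / 3)) (by positivity)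
  obtain ⟨z₀, -, r, ⟨hr0, hrδ⟩, hZ⟩ := exists_closedBall_mul_lt_hausdorffMeasure_inter hAmeas hA
    (ne_top_of_le_ne_top h1.ne (measure_mono (subset_univ A))) (c := 2 / 40)
    (ENNReal.div_lt_of_lt_mul (by norm_num)) (δ := min (ρ / 3) (σ / 2)) (by positivity)
  set Z := A ∩ closedBall z₀ r
  have hdiam : ediam Z ≤ ENNReal.ofReal (2 * r) :=
    (ediam_mono inter_subset_right).trans (ediam_closedBall_le_ofReal z₀ r)
  have hball := measure_inter_closedBall_le_of_subset_closedBall μH[1] (by norm_num)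
    (inter_subset_right : Z ⊆ closedBall z₀ r)
    (by linarith [min_le_left (ρ / 3) (σ / 2)]) fun z hz => (hAgood z hz.1).1
  refine ⟨Z, hAmeas.inter measurableSet_closedBall, ?_, hball, ?_⟩
  · calc EMetric.diam Z / 40 ≤ ENNReal.ofReal (2 * r) / 40 := by gcongr; exact hdiam
      _ = 2 / 40 * ENNReal.ofReal r := by
        rw [ENNReal.ofReal_mul (by norm_num), ENNReal.ofReal_ofNat, ENNReal.mul_div_right_comm]
      _ < μH[1] Z := hZ
  have hZσ : ∀ z ∈ Z, Z ×ˢ Z ⊆ closedBall (z, z) σ := fun z hz => by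
    have : Z ⊆ closedBall z σ := inter_subset_right.trans (closedBall_subset_closedBall'
      (by linarith [mem_closedBall'.1 hz.2, min_le_right (ρ / 3) (σ / 2)]))
    exact closedBall_prod_same z z σ ▸ prod_mono this this
  calc ∫⁻ p in Z ×ˢ Z ×ˢ Z, g p ∂(μH[1] : Measure X).prod ((μH[1] : Measure X).prod μH[1])
      ≤ ENNReal.ofReal (ε / 3) * μH[1] Z :=
        setLIntegral_prod_le hg fun z hz => (lintegral_mono_set (hZσ z hz)).trans (hAgood z hz.1).2
    _ ≤ ENNReal.ofReal (ε / 3) * (ENNReal.ofReal 3 * ediam Z) := by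
        gcongr
        exact measure_le_ofReal_mul_ediam _ (by norm_num) hball
          (ne_top_of_le_ne_top ENNReal.ofReal_ne_top hdiam)
    _ = ENNReal.ofReal ε * EMetric.diam Z := by
        rw [← mul_assoc, ← ENNReal.ofReal_mul (by positivity), div_mul_cancel₀ _ (by norm_num)]
        rfl
end

section
/- For every Borel subset Z of a metric space X, one has β(Z) ≤ c²(Z)/2. -/
/-! The inequality holds pointwise. If `a, b, c` are the side lengths of the triangle with `c`
the longest, then `∂ = a + b - c` and `diam = c`, while `c(z₁,z₂,z₃)² = 16 · area² / (abc)²`,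
with `16 · area² = (a + b - c)(a + c - b)(b + c - a)(a + b + c)` by Heron's formula. Cancelling
`a + b - c`, the claim becomes `2a²b² ≤ c (a + c - b)(b + c - a)(a + b + c)`, which follows from
`ab ≤ c²`, `a ≤ a + c - b`, `b ≤ b + c - a` and `2c ≤ a + b + c`. -/

open MeasureTheory Metric Set
open scoped ENNReal NNReal

def heronProduct (a b c : ℝ) : ℝ :=
  (a + b - c) * (a + c - b) * (b + c - a) * (a + b + c)

lemma two_mul_sq_mul_sq_le {a b c : ℝ} (ha : 0 ≤ a) (hb : 0 ≤ b) (hac : a ≤ c) (hbc : b ≤ c)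
    (hcab : c ≤ a + b) :
    2 * a ^ 2 * b ^ 2 ≤ c * (a + c - b) * (b + c - a) * (a + b + c) :=
  calc 2 * a ^ 2 * b ^ 2 = (a * b) * (2 * a * b) := by ring
    _ ≤ c ^ 2 * (2 * a * b) := by gcongr; nlinarith
    _ = c * a * b * (2 * c) := by ring
    _ ≤ c * (a + c - b) * (b + c - a) * (a + b + c) := by
      have hc : 0 ≤ c := ha.trans hac
      have h₁ : a ≤ a + c - b := by linarith
      have h₂ : b ≤ b + c - a := by linarith
      have h₃ : 2 * c ≤ a + b + c := by linarith
      have h₁' : 0 ≤ c * (a + c - b) := mul_nonneg hc (ha.trans h₁)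
      exact mul_le_mul (mul_le_mul (mul_le_mul_of_nonneg_left h₁ hc) h₂ hb h₁') h₃
        (by positivity) (mul_nonneg h₁' (hb.trans h₂))

lemma excess_div_cube_le_heronProduct {a b c : ℝ} (ha : 0 < a) (hb : 0 < b) (hac : a ≤ c)
    (hbc : b ≤ c) (hcab : c ≤ a + b) :
    (a + b - c) / c ^ 3 ≤ heronProduct a b c / (2 * a ^ 2 * b ^ 2 * c ^ 2) := by
  have hc : 0 < c := ha.trans_le hac
  rw [heronProduct, div_le_div_iff₀ (by positivity) (by positivity)]
  have hprod := two_mul_sq_mul_sq_le ha.le hb.le hac hbc hcab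
  calc (a + b - c) * (2 * a ^ 2 * b ^ 2 * c ^ 2) = (a + b - c) * (2 * a ^ 2 * b ^ 2) * c ^ 2 := by
        ring
    _ ≤ (a + b - c) * (c * (a + c - b) * (b + c - a) * (a + b + c)) * c ^ 2 := by
        gcongr
    _ = _ := by ring

lemma min_excess_div_max_cube_le_heronProduct {a b c : ℝ} (ha : 0 < a) (hb : 0 < b)
    (hc : 0 < c) (hcab : c ≤ a + b) (hbac : b ≤ a + c) (hacb : a ≤ c + b) :
    min (min (a + b - c) (a + c - b)) (c + b - a) / max (max a c) b ^ 3 ≤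
      heronProduct a b c / (2 * a ^ 2 * b ^ 2 * c ^ 2) := by
  rcases le_total b (max a c) with hb_le | hb_ge
  · rcases le_total a c with hac | hca
    · have hbc : b ≤ c := hb_le.trans_eq (max_eq_right hac)
      rw [max_eq_right hac, max_eq_left hbc]
      exact (div_le_div_of_nonneg_right ((min_le_left _ _).trans (min_le_left _ _))
        (by positivity)).trans (excess_div_cube_le_heronProduct ha hb hac hbc hcab)
    · have hba : b ≤ a := hb_le.trans_eq (max_eq_left hca)
      rw [max_eq_left hca, max_eq_left hba]
      calc _ ≤ (c + b - a) / a ^ 3 := by gcongr; exact min_le_right _ _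
        _ ≤ heronProduct c b a / (2 * c ^ 2 * b ^ 2 * a ^ 2) :=
          excess_div_cube_le_heronProduct hc hb hca hba hacb
        _ = _ := by rw [heronProduct, heronProduct]; ring_nf
  · rw [max_eq_right hb_ge]
    have hab : a ≤ b := (le_max_left a c).trans hb_ge
    have hcb : c ≤ b := (le_max_right a c).trans hb_ge
    calc _ ≤ (a + c - b) / b ^ 3 := by gcongr; exact (min_le_left _ _).trans (min_le_right _ _)
      _ ≤ heronProduct a c b / (2 * a ^ 2 * c ^ 2 * b ^ 2) :=
        excess_div_cube_le_heronProduct ha hc hab hcb hbac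
      _ = _ := by rw [heronProduct, heronProduct]; ring_nf

lemma mengerCurvature_sq {X : Type*} [MetricSpace X] {z₁ z₂ z₃ : X} (h₁₂ : 0 < dist z₁ z₂)
    (h₂₃ : 0 < dist z₂ z₃) (h₁₃ : 0 < dist z₁ z₃) :
    mengerCurvature z₁ z₂ z₃ ^ 2 = heronProduct (dist z₁ z₂) (dist z₂ z₃) (dist z₁ z₃) /
      (dist z₁ z₂ ^ 2 * dist z₂ z₃ ^ 2 * dist z₁ z₃ ^ 2) := by
  rw [mengerCurvature]
  set a := dist z₁ z₂
  set b := dist z₂ z₃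
  set c := dist z₁ z₃
  have hcab : c ≤ a + b := dist_triangle z₁ z₂ z₃
  have hbac : b ≤ a + c := by
    simpa only [dist_comm z₂ z₁, add_comm] using dist_triangle z₂ z₁ z₃
  have hacb : a ≤ c + b := by simpa only [dist_comm z₃ z₂] using dist_triangle z₁ z₃ z₂
  have ht : 0 ≤ 1 - ((a ^ 2 + b ^ 2 - c ^ 2) / (2 * a * b)) ^ 2 := by
    rw [div_pow, sub_nonneg, div_le_one (by positivity)]
    nlinarith [mul_nonneg (sub_nonneg.2 hbac) (sub_nonneg.2 hacb),
      mul_nonneg (sub_nonneg.2 hcab) (by positivity : (0 : ℝ) ≤ a + b + c)]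
  rw [Real.sin_arccos, div_pow, mul_pow, Real.sq_sqrt ht, heronProduct]
  field_simp
  ring

lemma tripleExcess_div_diam_cube_le {X : Type*} [MetricSpace X] (z₁ z₂ z₃ : X) :
    tripleExcess z₁ z₂ z₃ / diam ({z₁, z₂, z₃} : Set X) ^ 3 ≤
      mengerCurvature z₁ z₂ z₃ ^ 2 / 2 := by
  by_cases he : tripleExcess z₁ z₂ z₃ ≤ 0
  · exact (div_nonpos_of_nonpos_of_nonneg he (by positivity)).trans (by positivity)
  rw [tripleExcess, dist_comm z₂ z₁, dist_comm z₃ z₂] at he ⊢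
  simp only [not_le, lt_min_iff] at he
  obtain ⟨⟨h₃, h₂⟩, h₁⟩ := he
  rw [mengerCurvature_sq (by linarith) (by linarith) (by linarith), diam_triple, div_div,
    mul_comm _ (2 : ℝ), ← mul_assoc, ← mul_assoc]
  exact min_excess_div_max_cube_le_heronProduct (by linarith) (by linarith) (by linarith)
    (by linarith) (by linarith) (by linarith)

theorem stmt12_general (X : Type*) [MetricSpace X] [MeasurableSpace X] [BorelSpace X]
    (Z : Set X) :
    betaInt Z ≤
      (∫⁻ p in Z ×ˢ Z ×ˢ Z, ENNReal.ofReal (mengerCurvature p.1 p.2.1 p.2.2 ^ 2)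
        ∂((μH[1] : Measure X).prod ((μH[1] : Measure X).prod (μH[1] : Measure X)))) / 2 := by
  rw [betaInt, div_eq_mul_inv, ← lintegral_mul_const' _ _ (by simp)]
  refine lintegral_mono fun p => ?_
  rw [← div_eq_mul_inv, ← ENNReal.ofReal_ofNat 2, ← ENNReal.ofReal_div_of_pos two_pos]
  exact ENNReal.ofReal_le_ofReal (tripleExcess_div_diam_cube_le p.1 p.2.1 p.2.2)

/-- For every Borel `Z ⊆ X`, `β(Z) ≤ c²(Z)/2`, where
`c²(Z) = ∫_{Z³} c(z₁,z₂,z₃)² d(ℋ¹)³`. -/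
theorem stmt12 (X : Type*) [MetricSpace X] [MeasurableSpace X] [BorelSpace X]
    (Z : Set X) (hZ : MeasurableSet Z) :
    betaInt Z ≤
      (∫⁻ p in Z ×ˢ Z ×ˢ Z, ENNReal.ofReal (mengerCurvature p.1 p.2.1 p.2.2 ^ 2)
        ∂((μH[1] : Measure X).prod ((μH[1] : Measure X).prod (μH[1] : Measure X)))) / 2 :=
  stmt12_general X Z
end

section
/- Let x, y, z be three distinct points of a metric space and let φ ∈ [0,1]. If cos∠xyz ≤ −φ, i.e. d(x,y)² + d(y,z)² − d(x,z)² ≤ −2φ·d(x,y)·d(y,z), then the triple {x,y,z} belongs to Om(φ). -/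
open MeasureTheory Metric Set
open scoped ENNReal NNReal

/-- If `x, y, z` are distinct points with `cos ∠xyz ≤ -φ`, i.e.
`d(x,y)² + d(y,z)² − d(x,z)² ≤ −2φ·d(x,y)·d(y,z)`, then `{x,y,z} ∈ Om(φ)`. -/
theorem stmt13 (X : Type*) [MetricSpace X] (x y z : X)
    (hxy : x ≠ y) (hyz : y ≠ z) (hxz : x ≠ z)
    (φ : ℝ) (hφ0 : 0 ≤ φ) (hφ1 : φ ≤ 1)
    (h : dist x y ^ 2 + dist y z ^ 2 - dist x z ^ 2 ≤ -(2 * φ * dist x y * dist y z)) :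
    OmSet φ ({x, y, z} : Set X) := by
  have hp : 0 < dist x y := dist_pos.mpr hxy
  have hq : 0 < dist y z := dist_pos.mpr hyz
  have hr : 0 < dist x z := dist_pos.mpr hxz
  have hrp : dist x y < dist x z := by
    nlinarith [mul_nonneg (mul_nonneg hφ0 hp.le) hq.le]
  have hrq : dist y z < dist x z := by
    nlinarith [mul_nonneg (mul_nonneg hφ0 hp.le) hq.le]
  have key1 : dist x y + φ * dist y z ≤ dist x z := by
    have hsq : (dist x y + φ * dist y z) ^ 2 ≤ dist x z ^ 2 := by
      nlinarith [mul_nonneg (mul_nonneg (sub_nonneg.mpr hφ1)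
        (by linarith : (0:ℝ) ≤ 1 + φ)) (mul_nonneg hq.le hq.le)]
    have h0 : 0 ≤ dist x y + φ * dist y z := by positivity
    exact (pow_le_pow_iff_left₀ h0 hr.le (by norm_num)).mp hsq
  have key2 : dist z y + φ * dist y x ≤ dist z x := by
    rw [dist_comm z y, dist_comm y x, dist_comm z x]
    have hsq : (dist y z + φ * dist x y) ^ 2 ≤ dist x z ^ 2 := by
      nlinarith [mul_nonneg (mul_nonneg (sub_nonneg.mpr hφ1)
        (by linarith : (0:ℝ) ≤ 1 + φ)) (mul_nonneg hp.le hp.le)]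
    have h0 : 0 ≤ dist y z + φ * dist x y := by positivity
    exact (pow_le_pow_iff_left₀ h0 hr.le (by norm_num)).mp hsq
  intro a ha b hb c hc hbtw
  rw [MBtw, max_lt_iff] at hbtw
  obtain ⟨h1, h2⟩ := hbtw
  simp only [Set.mem_insert_iff, Set.mem_singleton_iff] at ha hb hc
  rcases ha with rfl|rfl|rfl <;> rcases hb with rfl|rfl|rfl <;> rcases hc with rfl|rfl|rfl <;>
    simp_all [dist_comm] <;>
    first
    | linarith
    | exact absurd h1 (not_lt.mpr dist_nonneg)
end

section
/- Let K ∈ [1,∞], let X be a separable metric space with finite diameter, let C₀, ε₀, ε₁ > 0, and let μ be a Borel measure on X such that μ(B(x,r)) ≤ C₀·r for all x ∈ X and r > 0, and c²_K(X,μ) ≤ ε₀·diam(X). Then the set Z = {x ∈ X : c²_K(B(x,r),μ) > ε₁·r for some r > 0} satisfies μ(Z) ≤ 5·C₀·ε₀·diam(X)/ε₁. -/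
open MeasureTheory Metric Set
open scoped ENNReal NNReal

lemma tripleSet_mono {X : Type*} [MetricSpace X] (K : ℝ≥0∞) {S T : Set X} (h : S ⊆ T) :
    tripleSet K S ⊆ tripleSet K T :=
  fun _ hp => ⟨h hp.1, h hp.2.1, h hp.2.2.1, hp.2.2.2⟩

lemma measurableSet_tripleSet {X : Type*} [MetricSpace X] [MeasurableSpace X] [BorelSpace X]
    [SecondCountableTopology X] (K : ℝ≥0∞) {S : Set X} (hS : MeasurableSet S) :
    MeasurableSet (tripleSet K S) := by
  have hv : ∀ i : Fin 3, Measurable (fun p : X × X × X => ![p.1, p.2.1, p.2.2] i) := by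
    intro i
    fin_cases i
    · exact measurable_fst
    · exact measurable_snd.fst
    · exact measurable_snd.snd
  have h1 : tripleSet K S = ((Prod.fst ⁻¹' S) ∩ ((fun p : X × X × X => p.2.1) ⁻¹' S) ∩
      ((fun p : X × X × X => p.2.2) ⁻¹' S)) ∩
      ⋂ (i : Fin 3) (j : Fin 3) (k : Fin 3) (l : Fin 3) (_ : k ≠ l),
        {p : X × X × X | edist (![p.1, p.2.1, p.2.2] i) (![p.1, p.2.1, p.2.2] j)
          < K * edist (![p.1, p.2.1, p.2.2] k) (![p.1, p.2.1, p.2.2] l)} := by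
    ext p
    simp only [tripleSet, Set.mem_setOf_eq, Set.mem_inter_iff, Set.mem_preimage,
      Set.mem_iInter]
    tauto
  rw [h1]
  refine (((hS.preimage measurable_fst).inter (hS.preimage measurable_snd.fst)).inter
    (hS.preimage measurable_snd.snd)).inter ?_
  refine MeasurableSet.iInter fun i => MeasurableSet.iInter fun j =>
    MeasurableSet.iInter fun k => MeasurableSet.iInter fun l => MeasurableSet.iInter fun _ => ?_
  exact measurableSet_lt ((hv i).edist (hv j)) (((hv k).edist (hv l)).const_mul K)

/-- Let `K ∈ [1,∞]`, `X` a separable metric space of finite diameter,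
`C₀, ε₀, ε₁ > 0` and `μ` a Borel measure with `μ(B(x,r)) ≤ C₀·r` and
`c²_K(X,μ) ≤ ε₀·diam X`. Then `Z = {x : c²_K(B(x,r),μ) > ε₁·r for some r > 0}` satisfies
`μ(Z) ≤ 5·C₀·ε₀·diam X / ε₁`. -/
theorem stmt15 (K : ℝ≥0∞) (hK : 1 ≤ K)
    (X : Type*) [MetricSpace X] [MeasurableSpace X] [BorelSpace X]
    [TopologicalSpace.SeparableSpace X]
    (hdiam : EMetric.diam (Set.univ : Set X) < ⊤)
    (C₀ ε₀ ε₁ : ℝ) (hC₀ : 0 < C₀) (hε₀ : 0 < ε₀) (hε₁ : 0 < ε₁)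
    (μ : Measure X)
    (hball : ∀ (x : X) (r : ℝ), 0 < r → μ (Metric.closedBall x r) ≤ ENNReal.ofReal (C₀ * r))
    (hc2 : c2K K Set.univ μ ≤ ENNReal.ofReal ε₀ * EMetric.diam (Set.univ : Set X)) :
    μ {x : X | ∃ r : ℝ, 0 < r ∧
        ENNReal.ofReal (ε₁ * r) < c2K K (Metric.closedBall x r) μ} ≤
      ENNReal.ofReal (5 * C₀ * ε₀ / ε₁) * EMetric.diam (Set.univ : Set X) := by
  classical
  haveI : SecondCountableTopology X := UniformSpace.secondCountable_of_separable X
  set D := EMetric.diam (Set.univ : Set X) with hDdef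
  set Z := {x : X | ∃ r : ℝ, 0 < r ∧
      ENNReal.ofReal (ε₁ * r) < c2K K (Metric.closedBall x r) μ} with hZdef
  have hr : ∀ x ∈ Z, ∃ r : ℝ, 0 < r ∧
      ENNReal.ofReal (ε₁ * r) < c2K K (Metric.closedBall x r) μ := fun x hx => hx
  choose! r hr0 hrc using hr
  have hsub : ∀ (x : X) (ρ : ℝ), c2K K (Metric.closedBall x ρ) μ ≤ c2K K (Set.univ : Set X) μ :=
    fun x ρ => lintegral_mono_set (tripleSet_mono K (Set.subset_univ _))
  have hc2top : c2K K (Set.univ : Set X) μ ≠ ⊤ :=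
    (hc2.trans_lt (ENNReal.mul_lt_top ENNReal.ofReal_lt_top hdiam)).ne
  have hRbound : ∀ x ∈ Z, r x ≤ ε₀ * D.toReal / ε₁ := by
    intro x hx
    have h1 : ENNReal.ofReal (ε₁ * r x) ≤ ENNReal.ofReal ε₀ * D :=
      ((hrc x hx).le.trans ((hsub _ _).trans hc2))
    have hfin : ENNReal.ofReal ε₀ * D ≠ ⊤ := (ENNReal.mul_lt_top ENNReal.ofReal_lt_top hdiam).ne
    have h2 : ε₁ * r x ≤ (ENNReal.ofReal ε₀ * D).toReal :=
      (ENNReal.ofReal_le_iff_le_toReal hfin).1 h1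
    have h3 : (ENNReal.ofReal ε₀ * D).toReal = ε₀ * D.toReal := by
      rw [ENNReal.toReal_mul, ENNReal.toReal_ofReal hε₀.le]
    rw [h3] at h2
    rw [div_eq_mul_inv, ← mul_comm (ε₁)⁻¹, ← mul_assoc] at *
    calc r x = ε₁⁻¹ * (ε₁ * r x) := by field_simp
    _ ≤ ε₁⁻¹ * (ε₀ * D.toReal) := by
        exact mul_le_mul_of_nonneg_left h2 (inv_nonneg.2 hε₁.le)
    _ = ε₁⁻¹ * ε₀ * D.toReal := by ring
  obtain ⟨u, huZ, hdisj, hcov⟩ :=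
    Vitali.exists_disjoint_subfamily_covering_enlargement_closedBall Z (fun a => a) r
      (ε₀ * D.toReal / ε₁) (by
        intro a ha
        have := hRbound a ha
        linarith [this]) 5 (by norm_num)
  have hu_cnt : u.Countable := by
    refine hdisj.countable_of_nonempty_interior fun b hb => ?_
    exact (Metric.nonempty_ball.2 (hr0 b (huZ hb))).mono Metric.ball_subset_interior_closedBall
  haveI : Countable ↥u := hu_cnt.to_subtype
  have hZcov : Z ⊆ ⋃ b ∈ u, Metric.closedBall b (5 * r b) := by
    intro a ha
    obtain ⟨b, hb, hsub'⟩ := hcov a ha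
    exact Set.mem_iUnion₂.2 ⟨b, hb, hsub' (Metric.mem_closedBall_self (hr0 a ha).le)⟩
  set c : ℝ≥0∞ := ENNReal.ofReal (5 * C₀ / ε₁) with hcdef
  -- tripleSets of the disjoint balls are disjoint and measurable
  set T : ↥u → Set (X × X × X) := fun b => tripleSet K (Metric.closedBall (b : X) (r b)) with hTdef
  have hTm : ∀ b : ↥u, MeasurableSet (T b) :=
    fun b => measurableSet_tripleSet K measurableSet_closedBall
  have hTdisj : Pairwise (Function.onFun Disjoint T) := by
    intro i j hij
    have hb : Disjoint (Metric.closedBall (i : X) (r i)) (Metric.closedBall (j : X) (r j)) :=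
      hdisj i.2 j.2 (fun h => hij (Subtype.ext h))
    rw [Function.onFun]
    rw [Set.disjoint_left]
    intro p hpi hpj
    exact Set.disjoint_left.1 hb hpi.1 hpj.1
  calc μ Z ≤ μ (⋃ b ∈ u, Metric.closedBall b (5 * r b)) := measure_mono hZcov
  _ ≤ ∑' b : ↥u, μ (Metric.closedBall (b : X) (5 * r b)) := measure_biUnion_le μ hu_cnt _
  _ ≤ ∑' b : ↥u, c * c2K K (Metric.closedBall (b : X) (r b)) μ := by
      refine ENNReal.tsum_le_tsum fun b => ?_
      have hb0 : 0 < r b := hr0 b (huZ b.2)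
      have h1 : μ (Metric.closedBall (b : X) (5 * r b)) ≤ ENNReal.ofReal (C₀ * (5 * r b)) :=
        hball _ _ (by linarith)
      have h2 : C₀ * (5 * r b) = (5 * C₀ / ε₁) * (ε₁ * r b) := by
        field_simp
      have h3 : ENNReal.ofReal (C₀ * (5 * r b)) = c * ENNReal.ofReal (ε₁ * r b) := by
        rw [h2, ENNReal.ofReal_mul (by positivity)]
      refine h1.trans (h3.le.trans ?_)
      exact mul_le_mul_right (hrc b (huZ b.2)).le c
  _ = c * ∑' b : ↥u, c2K K (Metric.closedBall (b : X) (r b)) μ := ENNReal.tsum_mul_left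
  _ ≤ c * (ENNReal.ofReal ε₀ * D) := by
      refine mul_le_mul_right ?_ c
      have hiU : (∑' b : ↥u, c2K K (Metric.closedBall (b : X) (r b)) μ)
          = ∫⁻ p in ⋃ b : ↥u, T b,
              ENNReal.ofReal (mengerCurvature p.1 p.2.1 p.2.2 ^ 2) ∂(μ.prod (μ.prod μ)) :=
        (lintegral_iUnion hTm hTdisj _).symm
      rw [hiU]
      refine le_trans (lintegral_mono_set
        (Set.iUnion_subset fun b => tripleSet_mono K (Set.subset_univ _))) hc2
  _ = ENNReal.ofReal (5 * C₀ * ε₀ / ε₁) * D := by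
      rw [hcdef, ← mul_assoc, ← ENNReal.ofReal_mul (by positivity)]
      congr 2
      field_simp
end
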